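/- Let U ⊆ ℂ be a connected open set, let F, G : U → ℂ be holomorphic with F not identically zero, and define x(u+iv) = (Re h₁, −Im h₁, Re h₃) where h₁' = F, h₃' = −F·G. Then g₁₁g₂₂ − g₁₂² = |F|⁴, so z₀ is a singular point of the immersion (i.e., g₁₁g₂₂ − g₁₂² = 0 at z₀) exactly when F(z₀) = 0, and the set of singular points of x is discrete in U (each singular point has a neighborhood containing no other singular point). In particular, the singularities of a simply isotropic minimal immersion given by Weierstrass data are isolated. -/

import Mathlib

noncomputable section

/-- Partial derivative of a map on ℂ ≅ ℝ² in the u-direction (real direction 1). -/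
def du {E : Type*} [NormedAddCommGroup E] [NormedSpace ℝ E]
    (f : ℂ → E) : ℂ → E := fun z => fderiv ℝ f z 1

/-- Partial derivative of a map on ℂ ≅ ℝ² in the v-direction (direction i). -/
def dv {E : Type*} [NormedAddCommGroup E] [NormedSpace ℝ E]
    (f : ℂ → E) : ℂ → E := fun z => fderiv ℝ f z Complex.I

/-- The degenerate simply isotropic inner product on ℝ³: ⟨u,v⟩ = u₁v₁ + u₂v₂. -/
def isoInner (a b : ℝ × ℝ × ℝ) : ℝ := a.1 * b.1 + a.2.1 * b.2.1

/-- The Euclidean dot product on ℝ³. -/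
def dot3 (a b : ℝ × ℝ × ℝ) : ℝ := a.1 * b.1 + a.2.1 * b.2.1 + a.2.2 * b.2.2

/-- The Euclidean cross product on ℝ³. -/
def cross3 (a b : ℝ × ℝ × ℝ) : ℝ × ℝ × ℝ :=
  (a.2.1 * b.2.2 - a.2.2 * b.2.1, a.2.2 * b.1 - a.1 * b.2.2, a.1 * b.2.1 - a.2.1 * b.1)

/-- First fundamental form coefficients (isotropic metric) of x : ℂ → ℝ³. -/
def g11 (x : ℂ → ℝ × ℝ × ℝ) (z : ℂ) : ℝ := isoInner (du x z) (du x z)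
def g12 (x : ℂ → ℝ × ℝ × ℝ) (z : ℂ) : ℝ := isoInner (du x z) (dv x z)
def g22 (x : ℂ → ℝ × ℝ × ℝ) (z : ℂ) : ℝ := isoInner (dv x z) (dv x z)

/-- The minimal normal: the unique vector of the form (n₁,n₂,1) Euclidean-orthogonal to
x_u and x_v (obtained by normalizing the cross product so its third component is 1). -/
def Nm (x : ℂ → ℝ × ℝ × ℝ) (z : ℂ) : ℝ × ℝ × ℝ :=
  ((cross3 (du x z) (dv x z)).1 / (cross3 (du x z) (dv x z)).2.2,
   (cross3 (du x z) (dv x z)).2.1 / (cross3 (du x z) (dv x z)).2.2, 1)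

/-- Second fundamental form coefficients with respect to the minimal normal. -/
def h11 (x : ℂ → ℝ × ℝ × ℝ) (z : ℂ) : ℝ := dot3 (du (du x) z) (Nm x z)
def h12 (x : ℂ → ℝ × ℝ × ℝ) (z : ℂ) : ℝ := dot3 (du (dv x) z) (Nm x z)
def h22 (x : ℂ → ℝ × ℝ × ℝ) (z : ℂ) : ℝ := dot3 (dv (dv x) z) (Nm x z)

/-- The isotropic Gaussian curvature. -/
def Kcurv (x : ℂ → ℝ × ℝ × ℝ) (z : ℂ) : ℝ :=
  (h11 x z * h22 x z - (h12 x z) ^ 2) / (g11 x z * g22 x z - (g12 x z) ^ 2)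

/-- The isotropic mean curvature. -/
def meanH (x : ℂ → ℝ × ℝ × ℝ) (z : ℂ) : ℝ :=
  (g11 x z * h22 x z - 2 * g12 x z * h12 x z + g22 x z * h11 x z) /
    (2 * (g11 x z * g22 x z - (g12 x z) ^ 2))

/-!
The derivative of `x` in a real direction `v` is `(Re (F v), -Im (F v), Re (-F G v))`; taking
`v = 1` and `v = i` shows that the isotropic metric is conformal, `g₁₁ = g₂₂ = |F|²`, `g₁₂ = 0`,
so `g₁₁g₂₂ - g₁₂² = |F|⁴`. Singular points are therefore the zeros of the holomorphic function
`F`, which is not identically zero on the connected set `U`, so they are isolated by the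
identity theorem.
-/

open Complex

def weierstrassMap (h₁ h₃ : ℂ → ℂ) : ℂ → ℝ × ℝ × ℝ :=
  fun w => ((h₁ w).re, -(h₁ w).im, (h₃ w).re)

section WeierstrassMap

variable {h₁ h₃ : ℂ → ℂ} {a b z : ℂ}

theorem fderiv_weierstrassMap_apply (h₁' : HasDerivAt h₁ a z) (h₃' : HasDerivAt h₃ b z)
    (v : ℂ) :
    fderiv ℝ (weierstrassMap h₁ h₃) z v = ((a * v).re, -(a * v).im, (b * v).re) := by
  have d₁ := h₁'.hasFDerivAt.restrictScalars ℝ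
  have d₃ := h₃'.hasFDerivAt.restrictScalars ℝ
  have hx : HasFDerivAt (weierstrassMap h₁ h₃) _ z := (reCLM.hasFDerivAt.comp z d₁).prodMk
    ((imCLM.hasFDerivAt.comp z d₁).neg.prodMk (reCLM.hasFDerivAt.comp z d₃))
  rw [hx.fderiv]
  simp [mul_comm]

theorem du_weierstrassMap (h₁' : HasDerivAt h₁ a z) (h₃' : HasDerivAt h₃ b z) :
    du (weierstrassMap h₁ h₃) z = (a.re, -a.im, b.re) := by
  simp [du, fderiv_weierstrassMap_apply h₁' h₃']

theorem dv_weierstrassMap (h₁' : HasDerivAt h₁ a z) (h₃' : HasDerivAt h₃ b z) :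
    dv (weierstrassMap h₁ h₃) z = (-a.im, -a.re, -b.im) := by
  simp [dv, fderiv_weierstrassMap_apply h₁' h₃']

theorem g11_weierstrassMap (h₁' : HasDerivAt h₁ a z) (h₃' : HasDerivAt h₃ b z) :
    g11 (weierstrassMap h₁ h₃) z = ‖a‖ ^ 2 := by
  rw [g11, isoInner, du_weierstrassMap h₁' h₃', Complex.sq_norm, normSq_apply]
  ring

theorem g12_weierstrassMap (h₁' : HasDerivAt h₁ a z) (h₃' : HasDerivAt h₃ b z) :
    g12 (weierstrassMap h₁ h₃) z = 0 := by
  rw [g12, isoInner, du_weierstrassMap h₁' h₃', dv_weierstrassMap h₁' h₃']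
  ring

theorem g22_weierstrassMap (h₁' : HasDerivAt h₁ a z) (h₃' : HasDerivAt h₃ b z) :
    g22 (weierstrassMap h₁ h₃) z = ‖a‖ ^ 2 := by
  rw [g22, isoInner, dv_weierstrassMap h₁' h₃', Complex.sq_norm, normSq_apply]
  ring

theorem metricDet_weierstrassMap (h₁' : HasDerivAt h₁ a z) (h₃' : HasDerivAt h₃ b z) :
    g11 (weierstrassMap h₁ h₃) z * g22 (weierstrassMap h₁ h₃) z -
      g12 (weierstrassMap h₁ h₃) z ^ 2 = ‖a‖ ^ 4 := by
  rw [g11_weierstrassMap h₁' h₃', g12_weierstrassMap h₁' h₃', g22_weierstrassMap h₁' h₃']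
  ring

end WeierstrassMap

theorem exists_ball_zero_eq_of_analyticOnNhd {F : ℂ → ℂ} {U : Set ℂ}
    (hF : AnalyticOnNhd ℂ F U) (hU : IsPreconnected U) (hFne : ∃ z ∈ U, F z ≠ 0)
    {z₀ : ℂ} (hz₀ : z₀ ∈ U) :
    ∃ ε > 0, ∀ z, dist z z₀ < ε → F z = 0 → z = z₀ := by
  rcases (hF z₀ hz₀).eventually_eq_zero_or_eventually_ne_zero with hzero | hne
  · obtain ⟨w, hw, hFw⟩ := hFne
    exact absurd (hF.eqOn_zero_of_preconnected_of_eventuallyEq_zero hU hz₀ hzero hw) hFw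
  · obtain ⟨ε, hε, hball⟩ := Metric.eventually_nhds_iff.mp (eventually_nhdsWithin_iff.mp hne)
    exact ⟨ε, hε, fun z hz hFz => not_not.mp fun hzz₀ => hball hz hzz₀ hFz⟩

theorem stmt17_general (U : Set ℂ) (hU : IsOpen U) (hUconn : IsConnected U)
    (F G h₁ h₃ : ℂ → ℂ)
    (hF : DifferentiableOn ℂ F U)
    (hFne : ∃ z ∈ U, F z ≠ 0)
    (hh₁ : ∀ z ∈ U, HasDerivAt h₁ (F z) z)
    (hh₃ : ∀ z ∈ U, HasDerivAt h₃ (-(F z * G z)) z) :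
    (∀ z ∈ U,
      g11 (fun w => ((h₁ w).re, -(h₁ w).im, (h₃ w).re)) z *
          g22 (fun w => ((h₁ w).re, -(h₁ w).im, (h₃ w).re)) z -
          (g12 (fun w => ((h₁ w).re, -(h₁ w).im, (h₃ w).re)) z) ^ 2 =
        ‖F z‖ ^ 4) ∧
    (∀ z₀ ∈ U,
      (g11 (fun w => ((h₁ w).re, -(h₁ w).im, (h₃ w).re)) z₀ *
          g22 (fun w => ((h₁ w).re, -(h₁ w).im, (h₃ w).re)) z₀ -
          (g12 (fun w => ((h₁ w).re, -(h₁ w).im, (h₃ w).re)) z₀) ^ 2 = 0 ↔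
        F z₀ = 0)) ∧
    (∀ z₀ ∈ U,
      g11 (fun w => ((h₁ w).re, -(h₁ w).im, (h₃ w).re)) z₀ *
          g22 (fun w => ((h₁ w).re, -(h₁ w).im, (h₃ w).re)) z₀ -
          (g12 (fun w => ((h₁ w).re, -(h₁ w).im, (h₃ w).re)) z₀) ^ 2 = 0 →
      ∃ ε > 0, ∀ z ∈ U, dist z z₀ < ε →
        (g11 (fun w => ((h₁ w).re, -(h₁ w).im, (h₃ w).re)) z *
            g22 (fun w => ((h₁ w).re, -(h₁ w).im, (h₃ w).re)) z -
            (g12 (fun w => ((h₁ w).re, -(h₁ w).im, (h₃ w).re)) z) ^ 2 = 0 →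
          z = z₀)) := by
  have hdet : ∀ z ∈ U, g11 (weierstrassMap h₁ h₃) z * g22 (weierstrassMap h₁ h₃) z -
      g12 (weierstrassMap h₁ h₃) z ^ 2 = ‖F z‖ ^ 4 :=
    fun z hz => metricDet_weierstrassMap (hh₁ z hz) (hh₃ z hz)
  have hsing : ∀ z ∈ U, g11 (weierstrassMap h₁ h₃) z * g22 (weierstrassMap h₁ h₃) z -
      g12 (weierstrassMap h₁ h₃) z ^ 2 = 0 ↔ F z = 0 := by
    intro z hz
    rw [hdet z hz]
    simp
  refine ⟨hdet, hsing, fun z₀ hz₀ _ => ?_⟩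
  obtain ⟨ε, hε, hzero⟩ := exists_ball_zero_eq_of_analyticOnNhd (hF.analyticOnNhd hU)
    hUconn.isPreconnected hFne hz₀
  exact ⟨ε, hε, fun z hz hzε hz_sing => hzero z hzε ((hsing z hz).mp hz_sing)⟩

/-- For the Weierstrass data φ = (F, iF, −FG) on a connected open set U with F not
identically zero: g₁₁g₂₂ − g₁₂² = |F|⁴, so z₀ is a singular point exactly when
F(z₀) = 0, and the set of singular points is discrete in U (each singular point has a
neighborhood containing no other singular point): the singularities of a simply
isotropic minimal immersion given by Weierstrass data are isolated. -/
theorem stmt17 (U : Set ℂ) (hU : IsOpen U) (hUconn : IsConnected U)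
    (F G h₁ h₃ : ℂ → ℂ)
    (hF : DifferentiableOn ℂ F U) (hG : DifferentiableOn ℂ G U)
    (hFne : ∃ z ∈ U, F z ≠ 0)
    (hh₁ : ∀ z ∈ U, HasDerivAt h₁ (F z) z)
    (hh₃ : ∀ z ∈ U, HasDerivAt h₃ (-(F z * G z)) z) :
    (∀ z ∈ U,
      g11 (fun w => ((h₁ w).re, -(h₁ w).im, (h₃ w).re)) z *
          g22 (fun w => ((h₁ w).re, -(h₁ w).im, (h₃ w).re)) z -
          (g12 (fun w => ((h₁ w).re, -(h₁ w).im, (h₃ w).re)) z) ^ 2 =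
        ‖F z‖ ^ 4) ∧
    (∀ z₀ ∈ U,
      (g11 (fun w => ((h₁ w).re, -(h₁ w).im, (h₃ w).re)) z₀ *
          g22 (fun w => ((h₁ w).re, -(h₁ w).im, (h₃ w).re)) z₀ -
          (g12 (fun w => ((h₁ w).re, -(h₁ w).im, (h₃ w).re)) z₀) ^ 2 = 0 ↔
        F z₀ = 0)) ∧
    (∀ z₀ ∈ U,
      g11 (fun w => ((h₁ w).re, -(h₁ w).im, (h₃ w).re)) z₀ *
          g22 (fun w => ((h₁ w).re, -(h₁ w).im, (h₃ w).re)) z₀ -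
          (g12 (fun w => ((h₁ w).re, -(h₁ w).im, (h₃ w).re)) z₀) ^ 2 = 0 →
      ∃ ε > 0, ∀ z ∈ U, dist z z₀ < ε →
        (g11 (fun w => ((h₁ w).re, -(h₁ w).im, (h₃ w).re)) z *
            g22 (fun w => ((h₁ w).re, -(h₁ w).im, (h₃ w).re)) z -
            (g12 (fun w => ((h₁ w).re, -(h₁ w).im, (h₃ w).re)) z) ^ 2 = 0 →
          z = z₀)) :=
  stmt17_general U hU hUconn F G h₁ h₃ hF hFne hh₁ hh₃
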